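/- For d = 8 and every ψ ∈ ℝ, set a = e^{iψ} and define M : (ZMod 8)² → ℂ by M_{p₁,p₂} = a^{ε(p₁ mod 4, p₂ mod 4)}, where the integer exponent table ε (rows indexed by p₁ mod 4 = 0,1,2,3, columns by p₂ mod 4 = 0,1,2,3) is: row 0: 0, 1, 0, −1; row 1: 1, −1, 1, 1; row 2: 0, −1, 0, 1; row 3: −1, −1, −1, 1. Then for every ψ ∈ ℝ and every p ∈ (ZMod 8)², ∑_{r ∈ (ZMod 8)²} ω^{−(p₂r₁ − p₁r₂)} · (M (p − r)) · (M r) = 64 · δ_{p,0}, where ω = exp(π i / 4). Consequently the 64 × 64 matrix H(ψ) with entries H(ψ) p q = (1/8) · ω^{−(p₂q₁ − p₁q₂)} · M (p − q) is, for every ψ, a Hermitian complex Hadamard matrix: Hermitian, satisfying H(ψ) * H(ψ) = 1, with all entries of absolute value 1/8 and trace 8. -/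

import Mathlib

/-!
For `p ≠ 0` the sum `∑_r ω^{σ(p,r)} a^{ε(p-r)+ε(r)}`, where `σ(p,r) = p₁r₂ - p₂r₁`, vanishes
identically in `a`: a pairing `r ↦ r + σ(p,r) u + v`, with `σ(p,u) = 0` and `σ(p,v) = 4`, preserves
the exponent of `a` and multiplies the root of unity by `ω⁴ = -1`, so the terms cancel in pairs.
The pairing is a transvection followed by a translation, hence a bijection; that suitable `u, v`
exist for each `p` is a finite check. For `p = 0` all 64 terms equal `1` because `ε` is odd.
The Hadamard property of `H` is then formal: `H²` is a twisted convolution of `M` with itself.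
-/

open Matrix

theorem Fintype.sum_eq_zero_of_equiv_neg {α R : Type*} [Fintype α] [NonAssocRing R]
    [NoZeroDivisors R] [CharZero R] (e : α ≃ α) (f : α → R) (h : ∀ x, f (e x) = -f x) :
    ∑ x, f x = 0 := by
  have hsum := e.sum_comp f
  simp only [h, Finset.sum_neg_distrib] at hsum
  exact CharZero.neg_eq_self_iff.1 hsum

section RootOfUnity

theorem pow_mul_two_eq_one_of_pow_eq_neg_one {M : Type*} [Monoid M] [HasDistribNeg M] {ζ : M}
    {k : ℕ} (h : ζ ^ k = -1) : ζ ^ (k * 2) = 1 := by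
  rw [pow_mul, h, neg_one_sq]

variable {n : ℕ} [NeZero n]

theorem pow_val_add_of_pow_eq_one {M : Type*} [Monoid M] {ζ : M} (hζ : ζ ^ n = 1)
    (a b : ZMod n) : ζ ^ (a + b).val = ζ ^ a.val * ζ ^ b.val := by
  rw [ZMod.val_add, ← pow_eq_pow_mod _ hζ, pow_add]

theorem star_pow_val_of_pow_eq_one {ζ : ℂ} (hζ : ζ ^ n = 1) (a : ZMod n) :
    star (ζ ^ a.val) = ζ ^ (-a).val := by
  have hnorm : ‖ζ ^ a.val‖ = 1 := by
    rw [norm_pow, Complex.norm_eq_one_of_pow_eq_one hζ (NeZero.ne n), one_pow]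
  have hinv : ζ ^ a.val * ζ ^ (-a).val = 1 := by
    rw [← pow_val_add_of_pow_eq_one hζ, add_neg_cancel, ZMod.val_zero, pow_zero]
  rw [← inv_eq_of_mul_eq_one_right hinv, Complex.inv_eq_conj hnorm, starRingEnd_apply]

end RootOfUnity

section SymplecticForm

variable {R : Type*} [CommRing R]

def symplecticForm : R × R →ₗ[R] R × R →ₗ[R] R :=
  LinearMap.mk₂ R (fun p q => p.1 * q.2 - p.2 * q.1)
    (fun _ _ _ => by simp only [Prod.fst_add, Prod.snd_add]; ring)
    (fun _ _ _ => by simp only [Prod.smul_fst, Prod.smul_snd, smul_eq_mul]; ring)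
    (fun _ _ _ => by simp only [Prod.fst_add, Prod.snd_add]; ring)
    (fun _ _ _ => by simp only [Prod.smul_fst, Prod.smul_snd, smul_eq_mul]; ring)

@[simp]
theorem symplecticForm_apply (p q : R × R) : symplecticForm p q = p.1 * q.2 - p.2 * q.1 :=
  rfl

theorem symplecticForm_self (p : R × R) : symplecticForm p p = 0 := by
  simp only [symplecticForm_apply]; ring

theorem symplecticForm_swap (p q : R × R) : symplecticForm q p = -symplecticForm p q := by
  simp only [symplecticForm_apply]; ring

end SymplecticForm

section TwistedMatrix

variable (n : ℕ) (ζ : ℂ) (M : ZMod n × ZMod n → ℂ)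

noncomputable def twistedMatrix : Matrix (ZMod n × ZMod n) (ZMod n × ZMod n) ℂ :=
  Matrix.of fun p q => (1 / n : ℂ) * ζ ^ (symplecticForm p q).val * M (p - q)

variable {n ζ M}

theorem twistedMatrix_apply (p q : ZMod n × ZMod n) :
    twistedMatrix n ζ M p q = (1 / n : ℂ) * ζ ^ (symplecticForm p q).val * M (p - q) :=
  rfl

variable [NeZero n]

theorem twistedMatrix_isHermitian (hζ : ζ ^ n = 1) (hM : ∀ x, star (M x) = M (-x)) :
    (twistedMatrix n ζ M).IsHermitian := by
  ext p q
  rw [conjTranspose_apply, twistedMatrix_apply, twistedMatrix_apply, star_mul', star_mul',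
    star_pow_val_of_pow_eq_one hζ, hM, ← symplecticForm_swap, neg_sub]
  simp

theorem twistedMatrix_mul_self (hζ : ζ ^ n = 1)
    (hconv : ∀ p, ∑ r, ζ ^ (symplecticForm p r).val * M (p - r) * M r =
      if p = 0 then (n : ℂ) ^ 2 else 0) :
    twistedMatrix n ζ M * twistedMatrix n ζ M = 1 := by
  ext p q
  have hterm : ∀ s, twistedMatrix n ζ M p (s + q) * twistedMatrix n ζ M (s + q) q =
      (1 / n : ℂ) ^ 2 * ζ ^ (symplecticForm p q).val *
        (ζ ^ (symplecticForm (p - q) s).val * M (p - q - s) * M s) := by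
    intro s
    have hσ : symplecticForm p (s + q) + symplecticForm (s + q) q =
        symplecticForm p q + symplecticForm (p - q) s := by
      simp only [symplecticForm_apply, Prod.fst_add, Prod.snd_add, Prod.fst_sub, Prod.snd_sub]
      ring
    have hζσ := congrArg (fun k => ζ ^ k.val) hσ
    simp only [pow_val_add_of_pow_eq_one hζ] at hζσ
    rw [twistedMatrix_apply, twistedMatrix_apply, add_sub_cancel_right, sub_add_eq_sub_sub,
      sub_right_comm]
    linear_combination (1 / n : ℂ) ^ 2 * M (p - q - s) * M s * hζσ
  rw [mul_apply, ← Equiv.sum_comp (Equiv.addRight q) (fun r => _ * _)]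
  simp only [Equiv.coe_addRight, hterm, ← Finset.mul_sum, hconv, sub_eq_zero]
  by_cases hpq : p = q
  · subst hpq
    have hn : (n : ℂ) ≠ 0 := Nat.cast_ne_zero.2 (NeZero.ne n)
    simp only [if_true, symplecticForm_self, ZMod.val_zero, pow_zero, one_apply_eq]
    field_simp
  · simp [hpq]

theorem norm_twistedMatrix_apply (hζ : ζ ^ n = 1) (hM : ∀ x, ‖M x‖ = 1) (p q : ZMod n × ZMod n) :
    ‖twistedMatrix n ζ M p q‖ = 1 / n := by
  rw [twistedMatrix_apply, norm_mul, norm_mul, norm_pow,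
    Complex.norm_eq_one_of_pow_eq_one hζ (NeZero.ne n), hM]
  simp

theorem trace_twistedMatrix (hM : M 0 = 1) : (twistedMatrix n ζ M).trace = n := by
  have hn : (n : ℂ) ≠ 0 := Nat.cast_ne_zero.2 (NeZero.ne n)
  simp only [trace, diag_apply, twistedMatrix_apply, symplecticForm_self, ZMod.val_zero, pow_zero,
    sub_self, hM, Finset.sum_const, Finset.card_univ, Fintype.card_prod, ZMod.card]
  rw [nsmul_eq_mul]
  push_cast
  field_simp

end TwistedMatrix

theorem Complex.star_zpow_of_norm_eq_one {z : ℂ} (hz : ‖z‖ = 1) (e : ℤ) :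
    star (z ^ e) = z ^ (-e) := by
  rw [star_zpow₀, ← starRingEnd_apply, ← Complex.inv_eq_conj hz, _root_.inv_zpow']

section SicFiducial

def sicExponent (p : ZMod 8 × ZMod 8) : ℤ :=
  (!![0, 1, 0, -1; 1, -1, 1, 1; 0, -1, 0, 1; -1, -1, -1, 1] :
      Matrix (Fin 4) (Fin 4) ℤ)
    ⟨p.1.val % 4, Nat.mod_lt _ (by norm_num)⟩
    ⟨p.2.val % 4, Nat.mod_lt _ (by norm_num)⟩

theorem sicExponent_neg : ∀ p, sicExponent (-p) = -sicExponent p := by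
  decide

theorem sicExponent_zero : sicExponent 0 = 0 := by
  decide

theorem exists_sicExponent_pairing : ∀ p : ZMod 8 × ZMod 8, p ≠ 0 → ∃ u v : ZMod 8 × ZMod 8,
    symplecticForm p u = 0 ∧ symplecticForm p v = 4 ∧ ∀ r,
      sicExponent (p - (r + symplecticForm p r • u + v)) +
          sicExponent (r + symplecticForm p r • u + v) =
        sicExponent (p - r) + sicExponent r := by
  decide +kernel

variable {K : Type*} [Field K] [CharZero K] {ζ z : K}

theorem sum_symplectic_zpow_sicExponent (hζ : ζ ^ 4 = -1) (hz : z ≠ 0) (p : ZMod 8 × ZMod 8) :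
    ∑ r, ζ ^ (symplecticForm p r).val * z ^ sicExponent (p - r) * z ^ sicExponent r =
      if p = 0 then 64 else 0 := by
  simp only [mul_assoc, ← zpow_add₀ hz]
  split_ifs with hp
  · subst hp
    simp only [map_zero, LinearMap.zero_apply, ZMod.val_zero, pow_zero, zero_sub, sicExponent_neg,
      neg_add_cancel, zpow_zero, mul_one, Finset.sum_const, Finset.card_univ, Fintype.card_prod,
      ZMod.card, nsmul_eq_mul]
    norm_num
  · obtain ⟨u, v, hu, hv, hE⟩ := exists_sicExponent_pairing p hp
    refine Fintype.sum_eq_zero_of_equiv_neg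
      ((LinearEquiv.transvection hu).toEquiv.trans (Equiv.addRight v)) _ fun r => ?_
    have hσ : symplecticForm p (r + symplecticForm p r • u + v) = symplecticForm p r + 4 := by
      rw [map_add, map_add, map_smul, hu, hv, smul_zero, add_zero]
    simp only [Equiv.trans_apply, LinearEquiv.coe_toEquiv, LinearEquiv.transvection.apply,
      Equiv.coe_addRight]
    rw [hσ, hE, pow_val_add_of_pow_eq_one (pow_mul_two_eq_one_of_pow_eq_neg_one hζ), show (4 : ZMod 8).val = 4 from rfl, hζ]
    ring

end SicFiducial

/-- For `d = 8` and `a = e^{iψ}`, the squared-phase matrix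
`M p = a^{ε(p₁ mod 4, p₂ mod 4)}` (with the integer exponent table `ε` below) satisfies
`∑_r ω^{-(p₂r₁ - p₁r₂)} M(p-r) M(r) = 64 δ_{p,0}` for every `ψ` and `p`, where
`ω = exp(πi/4)`; consequently `H(ψ) p q = (1/8) ω^{-(p₂q₁ - p₁q₂)} M (p-q)` is for every
`ψ` a Hermitian complex Hadamard matrix of order 64 with trace 8. -/
theorem stmt_19
    (M : ℝ → ZMod 8 × ZMod 8 → ℂ)
    (hM : ∀ (ψ : ℝ) (p : ZMod 8 × ZMod 8),
      M ψ p = Complex.exp (Complex.I * ψ *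
        ((!![0, 1, 0, -1; 1, -1, 1, 1; 0, -1, 0, 1; -1, -1, -1, 1] :
            Matrix (Fin 4) (Fin 4) ℤ)
          ⟨p.1.val % 4, Nat.mod_lt _ (by norm_num)⟩
          ⟨p.2.val % 4, Nat.mod_lt _ (by norm_num)⟩ : ℤ)))
    (H : ℝ → Matrix (ZMod 8 × ZMod 8) (ZMod 8 × ZMod 8) ℂ)
    (hH : ∀ (ψ : ℝ) (p q : ZMod 8 × ZMod 8),
      H ψ p q = (1 / 8 : ℂ) *
        Complex.exp (Real.pi * Complex.I / 4) ^ ((p.1 * q.2 - p.2 * q.1).val)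
          * M ψ (p - q)) :
    (∀ (ψ : ℝ) (p : ZMod 8 × ZMod 8),
      ∑ r : ZMod 8 × ZMod 8,
        Complex.exp (Real.pi * Complex.I / 4) ^ ((p.1 * r.2 - p.2 * r.1).val)
          * M ψ (p - r) * M ψ r
        = if p = 0 then 64 else 0) ∧
    ∀ ψ : ℝ,
      (H ψ).IsHermitian ∧
      H ψ * H ψ = 1 ∧
      (∀ p q, ‖H ψ p q‖ = 1 / 8) ∧
      (H ψ).trace = 8 := by
  set ω := Complex.exp (Real.pi * Complex.I / 4)
  have hω : ω ^ 4 = -1 := by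
    rw [← Complex.exp_nat_mul, ← Complex.exp_pi_mul_I]
    congr 1
    push_cast
    ring
  have hω8 : ω ^ 8 = 1 := pow_mul_two_eq_one_of_pow_eq_neg_one hω
  have hMz : ∀ ψ x, M ψ x = Complex.exp (ψ * Complex.I) ^ sicExponent x := by
    intro ψ x
    rw [hM, ← Complex.exp_int_mul, sicExponent]
    ring_nf
  have hconv : ∀ ψ p, ∑ r, ω ^ (symplecticForm p r).val * M ψ (p - r) * M ψ r =
      if p = 0 then 64 else 0 := by
    intro ψ p
    simp only [hMz]
    exact sum_symplectic_zpow_sicExponent hω (Complex.exp_ne_zero _) p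
  refine ⟨hconv, fun ψ => ?_⟩
  have hH' : H ψ = twistedMatrix 8 ω (M ψ) := by
    ext p q
    rw [hH, twistedMatrix_apply]
    norm_num
  have hnorm := Complex.norm_exp_ofReal_mul_I ψ
  rw [hH']
  refine ⟨twistedMatrix_isHermitian hω8 fun x => ?_,
    twistedMatrix_mul_self hω8 fun p => by rw [hconv]; norm_num,
    norm_twistedMatrix_apply hω8 fun x => ?_, (trace_twistedMatrix ?_).trans (by norm_num)⟩
  · rw [hMz, hMz, Complex.star_zpow_of_norm_eq_one hnorm, sicExponent_neg]
  · rw [hMz, norm_zpow, hnorm, _root_.one_zpow]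
  · rw [hMz, sicExponent_zero, zpow_zero]
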